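/- For every two-qubit density matrix ρ (a positive semidefinite 4×4 complex matrix with trace 1), the quantum value of the Peres–Mermin expression equals 6, independently of the state: Tr(ρ * (A 0 0 * A 0 1 * A 0 2 + A 1 0 * A 1 1 * A 1 2 + A 2 0 * A 2 1 * A 2 2 + A 0 0 * A 1 0 * A 2 0 + A 0 1 * A 1 1 * A 2 1 − A 0 2 * A 1 2 * A 2 2)) = 6. -/

import Mathlib

open Matrix Kronecker
open scoped ComplexOrder

/-- The Pauli matrix σx. -/
def σx : Matrix (Fin 2) (Fin 2) ℂ := !![0, 1; 1, 0]
/-- The Pauli matrix σy. -/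
def σy : Matrix (Fin 2) (Fin 2) ℂ := !![0, -Complex.I; Complex.I, 0]
/-- The Pauli matrix σz. -/
def σz : Matrix (Fin 2) (Fin 2) ℂ := !![1, 0; 0, -1]

/-- Kronecker product of two 2×2 matrices, reindexed as a 4×4 matrix. -/
def kron (M N : Matrix (Fin 2) (Fin 2) ℂ) : Matrix (Fin 4) (Fin 4) ℂ :=
  Matrix.reindex finProdFinEquiv finProdFinEquiv (M ⊗ₖ N)

/-- The Peres–Mermin table of two-qubit observables. -/
def PM : Fin 3 → Fin 3 → Matrix (Fin 4) (Fin 4) ℂ :=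
  ![![kron σx 1, kron 1 σx, kron σx σx],
    ![kron 1 σz, kron σz 1, kron σz σz],
    ![kron σx σz, kron σz σx, kron σy σy]]

/-!
By the mixed-product rule, each triple product in the table is a Kronecker product of two
products of Pauli matrices, and these are scalars: `σx σx = σz σz = 1`, `σx σz σy = -i` and
`σz σx σy = i`. Hence every row, and the first two columns, multiply to `1`, while the third
column gives `(-i)² = -1`. The Peres–Mermin operator is therefore `6 • 1`, whose expectation
in any state of trace one is `6`.
-/

lemma kron_mul_kron (A B C D : Matrix (Fin 2) (Fin 2) ℂ) :
    kron A B * kron C D = kron (A * C) (B * D) := by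
  simp only [kron, reindex_apply, submatrix_mul_equiv, mul_kronecker_mul]

lemma kron_one_one : kron 1 1 = 1 := by
  simp only [kron, one_kronecker_one, reindex_apply, submatrix_one_equiv]

lemma kron_smul_smul (a b : ℂ) (A B : Matrix (Fin 2) (Fin 2) ℂ) :
    kron (a • A) (b • B) = (a * b) • kron A B := by
  rw [kron, kron, smul_kronecker, kronecker_smul, smul_smul]
  rfl

lemma σx_mul_self : σx * σx = 1 := by
  ext i j; fin_cases i <;> fin_cases j <;> simp [σx]

lemma σz_mul_self : σz * σz = 1 := by
  ext i j; fin_cases i <;> fin_cases j <;> simp [σz]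

lemma σx_mul_σz_mul_σy : σx * σz * σy = -Complex.I • 1 := by
  ext i j; fin_cases i <;> fin_cases j <;> simp [σx, σy, σz]

lemma σz_mul_σx_mul_σy : σz * σx * σy = Complex.I • 1 := by
  ext i j; fin_cases i <;> fin_cases j <;> simp [σx, σy, σz]

lemma PM_row_prod (i : Fin 3) : PM i 0 * PM i 1 * PM i 2 = 1 := by
  fin_cases i <;>
    simp only [PM, Fin.zero_eta, Fin.mk_one, Fin.reduceFinMk, cons_val, kron_mul_kron, mul_one,
      one_mul, σx_mul_self, σz_mul_self, σx_mul_σz_mul_σy, σz_mul_σx_mul_σy, kron_smul_smul,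
      kron_one_one, neg_mul, Complex.I_mul_I, neg_neg, one_smul]

lemma PM_col_prod (j : Fin 3) : PM 0 j * PM 1 j * PM 2 j = if j = 2 then -1 else 1 := by
  fin_cases j <;>
    simp only [PM, Fin.zero_eta, Fin.mk_one, Fin.reduceFinMk, cons_val, kron_mul_kron, mul_one,
      one_mul, σx_mul_self, σz_mul_self, σx_mul_σz_mul_σy, kron_smul_smul, kron_one_one,
      neg_mul_neg, Complex.I_mul_I, neg_one_smul, Fin.reduceEq, ↓reduceIte]

lemma peres_mermin_operator :
    PM 0 0 * PM 0 1 * PM 0 2 + PM 1 0 * PM 1 1 * PM 1 2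
        + PM 2 0 * PM 2 1 * PM 2 2 + PM 0 0 * PM 1 0 * PM 2 0
        + PM 0 1 * PM 1 1 * PM 2 1 - PM 0 2 * PM 1 2 * PM 2 2 = (6 : ℂ) • 1 := by
  simp only [PM_row_prod, PM_col_prod, Fin.reduceEq, ↓reduceIte]
  module

theorem peres_mermin_quantum_value_general (ρ : Matrix (Fin 4) (Fin 4) ℂ)
    (htr : ρ.trace = 1) :
    (ρ * (PM 0 0 * PM 0 1 * PM 0 2 + PM 1 0 * PM 1 1 * PM 1 2
        + PM 2 0 * PM 2 1 * PM 2 2 + PM 0 0 * PM 1 0 * PM 2 0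
        + PM 0 1 * PM 1 1 * PM 2 1 - PM 0 2 * PM 1 2 * PM 2 2)).trace = 6 := by
  rw [peres_mermin_operator, Matrix.mul_smul, mul_one, trace_smul, htr, smul_eq_mul, mul_one]

/-- State-independence of the quantum Peres–Mermin value: for every two-qubit
density matrix ρ, the expectation of the Peres–Mermin expression equals 6. -/
theorem peres_mermin_quantum_value (ρ : Matrix (Fin 4) (Fin 4) ℂ)
    (hρ : ρ.PosSemidef) (htr : ρ.trace = 1) :
    (ρ * (PM 0 0 * PM 0 1 * PM 0 2 + PM 1 0 * PM 1 1 * PM 1 2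
        + PM 2 0 * PM 2 1 * PM 2 2 + PM 0 0 * PM 1 0 * PM 2 0
        + PM 0 1 * PM 1 1 * PM 2 1 - PM 0 2 * PM 1 2 * PM 2 2)).trace = 6 :=
  peres_mermin_quantum_value_general ρ htr
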